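/- arXiv:1807.05427 — 3 statements merged into one kernel-verified Lean document; each statement's English description precedes it below -/
import Mathlib

section
/- Let ρ : (ℝ⁺)⁵ → ℝ⁺ be a function satisfying: (ρ1) ρ(1,1,1,2,0) ≤ 1, ρ(1,1,1,0,2) ≤ 1, ρ(1,1,1,1,1) ≤ 1; (ρ2) ρ is sub-homogeneous, i.e. ρ(αx₁,…,αx₅) ≤ α·ρ(x₁,…,x₅) for all α ≥ 0; (ρ3) ρ is non-decreasing in each coordinate. If u, v ∈ ℝ⁺ satisfy u < max{ρ(v,v,u,v+u,0), ρ(v,v,u,0,v+u), ρ(v,u,v,v+u,0), ρ(v,u,v,0,v+u)}, then u < v. -/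
theorem stmt_2 (ρ : (Fin 5 → ℝ) → ℝ)
    (hρ0 : ∀ x : Fin 5 → ℝ, (∀ i, 0 ≤ x i) → 0 ≤ ρ x)
    (hρ1a : ρ ![1, 1, 1, 2, 0] ≤ 1)
    (hρ1b : ρ ![1, 1, 1, 0, 2] ≤ 1)
    (hρ1c : ρ ![1, 1, 1, 1, 1] ≤ 1)
    (hρ2 : ∀ α : ℝ, 0 ≤ α → ∀ x : Fin 5 → ℝ, (∀ i, 0 ≤ x i) → ρ (α • x) ≤ α * ρ x)
    (hρ3 : ∀ x y : Fin 5 → ℝ, (∀ i, 0 ≤ x i) → (∀ i, x i ≤ y i) → ρ x ≤ ρ y)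
    (u v : ℝ) (hu : 0 ≤ u) (hv : 0 ≤ v)
    (h : u < max (max (ρ ![v, v, u, v + u, 0]) (ρ ![v, v, u, 0, v + u]))
          (max (ρ ![v, u, v, v + u, 0]) (ρ ![v, u, v, 0, v + u]))) :
    u < v := by
  by_contra h'
  push_neg at h'
  have e1 : (u • ![1, 1, 1, 2, 0] : Fin 5 → ℝ) = ![u, u, u, 2 * u, 0] := by
    funext i; fin_cases i <;> simp <;> ring
  have e2 : (u • ![1, 1, 1, 0, 2] : Fin 5 → ℝ) = ![u, u, u, 0, 2 * u] := by
    funext i; fin_cases i <;> simp <;> ring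
  have pos1 : ∀ i, (0:ℝ) ≤ ![1, 1, 1, 2, 0] i := by
    intro i; fin_cases i <;> norm_num
  have pos2 : ∀ i, (0:ℝ) ≤ ![1, 1, 1, 0, 2] i := by
    intro i; fin_cases i <;> norm_num
  have b1 : ρ ![v, v, u, v + u, 0] ≤ u := by
    calc ρ ![v, v, u, v + u, 0] ≤ ρ ![u, u, u, 2 * u, 0] := by
          apply hρ3
          · intro i; fin_cases i <;> simp [hv, hu] <;> positivity
          · intro i; fin_cases i <;> simp [h'] <;> linarith
      _ ≤ u * ρ ![1, 1, 1, 2, 0] := by rw [← e1]; exact hρ2 u hu _ pos1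
      _ ≤ u * 1 := by nlinarith
      _ = u := mul_one u
  have b2 : ρ ![v, v, u, 0, v + u] ≤ u := by
    calc ρ ![v, v, u, 0, v + u] ≤ ρ ![u, u, u, 0, 2 * u] := by
          apply hρ3
          · intro i; fin_cases i <;> simp [hv, hu] <;> positivity
          · intro i; fin_cases i <;> simp [h'] <;> linarith
      _ ≤ u * ρ ![1, 1, 1, 0, 2] := by rw [← e2]; exact hρ2 u hu _ pos2
      _ ≤ u * 1 := by nlinarith
      _ = u := mul_one u
  have b3 : ρ ![v, u, v, v + u, 0] ≤ u := by
    calc ρ ![v, u, v, v + u, 0] ≤ ρ ![u, u, u, 2 * u, 0] := by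
          apply hρ3
          · intro i; fin_cases i <;> simp [hv, hu] <;> positivity
          · intro i; fin_cases i <;> simp [h'] <;> linarith
      _ ≤ u * ρ ![1, 1, 1, 2, 0] := by rw [← e1]; exact hρ2 u hu _ pos1
      _ ≤ u * 1 := by nlinarith
      _ = u := mul_one u
  have b4 : ρ ![v, u, v, 0, v + u] ≤ u := by
    calc ρ ![v, u, v, 0, v + u] ≤ ρ ![u, u, u, 0, 2 * u] := by
          apply hρ3
          · intro i; fin_cases i <;> simp [hv, hu] <;> positivity
          · intro i; fin_cases i <;> simp [h'] <;> linarith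
      _ ≤ u * ρ ![1, 1, 1, 0, 2] := by rw [← e2]; exact hρ2 u hu _ pos2
      _ ≤ u * 1 := by nlinarith
      _ = u := mul_one u
  have : max (max (ρ ![v, v, u, v + u, 0]) (ρ ![v, v, u, 0, v + u]))
          (max (ρ ![v, u, v, v + u, 0]) (ρ ![v, u, v, 0, v + u])) ≤ u := by
    simp [max_le_iff, b1, b2, b3, b4]
  linarith
end

section
/- For a > 1, the function ϑ(t) = a + ln(√(t+1)) on (0,∞) takes values in (1,∞), is non-decreasing, satisfies (ϑ3) (there exist r ∈ (0,1) and λ ∈ (0,∞] with lim_{t→0⁺}(ϑ(t)−1)/tʳ = λ), but does not satisfy (ϑ2): with tₙ = 1/n, tₙ → 0 while ϑ(tₙ) → a > 1. -/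
open Filter Topology

theorem stmt_4 (a : ℝ) (ha : 1 < a) :
    (∀ t : ℝ, 0 < t → 1 < a + Real.log (Real.sqrt (t + 1))) ∧
    MonotoneOn (fun t : ℝ => a + Real.log (Real.sqrt (t + 1))) (Set.Ioi 0) ∧
    (∃ r ∈ Set.Ioo (0 : ℝ) 1,
      Tendsto (fun t : ℝ => (a + Real.log (Real.sqrt (t + 1)) - 1) / t ^ r)
          (𝓝[>] 0) atTop ∨
        ∃ l : ℝ, 0 < l ∧
          Tendsto (fun t : ℝ => (a + Real.log (Real.sqrt (t + 1)) - 1) / t ^ r)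
            (𝓝[>] 0) (𝓝 l)) ∧
    ¬(∀ t : ℕ → ℝ, (∀ n, 0 < t n) →
        (Tendsto (fun n => a + Real.log (Real.sqrt (t n + 1))) atTop (𝓝 1) ↔
          Tendsto t atTop (𝓝 0))) ∧
    Tendsto (fun n : ℕ => (1 : ℝ) / (n + 1)) atTop (𝓝 0) ∧
    Tendsto (fun n : ℕ => a + Real.log (Real.sqrt (1 / (n + 1 : ℝ) + 1))) atTop
      (𝓝 a) := by
  have hlog : ∀ t : ℝ, 0 ≤ t → 0 ≤ Real.log (Real.sqrt (t + 1)) := by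
    intro t ht
    apply Real.log_nonneg
    have h1 : Real.sqrt 1 ≤ Real.sqrt (t + 1) := Real.sqrt_le_sqrt (by linarith)
    rwa [Real.sqrt_one] at h1
  -- continuity of x ↦ a + log √(x+1) at 0, with value a
  have hcont : Tendsto (fun x : ℝ => a + Real.log (Real.sqrt (x + 1))) (𝓝 0) (𝓝 a) := by
    have : ContinuousAt (fun x : ℝ => a + Real.log (Real.sqrt (x + 1))) 0 := by
      apply ContinuousAt.add continuousAt_const
      apply ContinuousAt.log
      · exact (Real.continuous_sqrt.comp (continuous_id.add continuous_const)).continuousAt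
      · simp [Real.sqrt_eq_zero']
    simpa using this.tendsto
  have h5 : Tendsto (fun n : ℕ => (1 : ℝ) / (n + 1)) atTop (𝓝 0) :=
    tendsto_one_div_add_atTop_nhds_zero_nat
  have h6 : Tendsto (fun n : ℕ => a + Real.log (Real.sqrt (1 / (n + 1 : ℝ) + 1))) atTop (𝓝 a) :=
    hcont.comp h5
  refine ⟨fun t ht => by have := hlog t ht.le; linarith, ?_, ?_, ?_, h5, h6⟩
  · intro x hx y hy hxy
    simp only [Set.mem_Ioi] at hx hy
    have : Real.log (Real.sqrt (x + 1)) ≤ Real.log (Real.sqrt (y + 1)) :=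
      Real.log_le_log (Real.sqrt_pos.mpr (by linarith)) (Real.sqrt_le_sqrt (by linarith))
    simpa using this
  · refine ⟨1/2, ⟨by norm_num, by norm_num⟩, Or.inl ?_⟩
    have hnum : Tendsto (fun t : ℝ => a + Real.log (Real.sqrt (t + 1)) - 1) (𝓝[>] 0)
        (𝓝 (a - 1)) := by
      exact ((hcont.mono_left nhdsWithin_le_nhds).sub tendsto_const_nhds)
    have hden : Tendsto (fun t : ℝ => ((t : ℝ) ^ (1/2 : ℝ))⁻¹) (𝓝[>] 0) atTop := by
      apply tendsto_inv_nhdsGT_zero.comp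
      rw [tendsto_nhdsWithin_iff]
      constructor
      · have : ContinuousAt (fun t : ℝ => t ^ (1/2 : ℝ)) 0 :=
          Real.continuousAt_rpow_const 0 (1/2) (Or.inr (by norm_num))
        simpa [Real.zero_rpow (by norm_num : (1/2:ℝ) ≠ 0)] using
          this.tendsto.mono_left nhdsWithin_le_nhds
      · filter_upwards [self_mem_nhdsWithin] with t ht
        exact Real.rpow_pos_of_pos ht _
    have := Tendsto.pos_mul_atTop (by linarith : (0:ℝ) < a - 1) hnum hden
    simpa [div_eq_mul_inv] using this
  · intro h
    have h1 := (h (fun n => 1 / (n + 1)) (fun n => by positivity)).mpr h5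
    have := tendsto_nhds_unique h1 h6
    linarith
end

section
/- Let ϑ : (0,∞) → (1,∞) be non-decreasing and satisfy (ϑ3): ∃ r ∈ (0,1), λ ∈ (0,∞] with lim_{t→0⁺}(ϑ(t)−1)/tʳ = λ. Let {σₙ} ⊂ (0,∞) be a decreasing sequence with 1 < ϑ(σₙ) ≤ [ϑ(σ₀)]^{kⁿ} for all n ≥ 1 and some k ∈ (0,1). Then lim_{n→∞} σₙ = 0 and lim_{n→∞} n·σₙʳ = 0. -/
/-!
Since `k ^ n → 0`, the bound gives `ϑ (σ n) → 1`, and as `ϑ > 1` is monotone this forces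
`σ n → 0`. Condition (ϑ3) yields `c > 0` with `c t ^ r ≤ ϑ t - 1` near `0`, while Bernoulli's
inequality gives `ϑ (σ 0) ^ (k ^ n) - 1 ≤ k ^ n (ϑ (σ 0) - 1)`. Hence `σ n ^ r = O(k ^ n)`, and
`n k ^ n → 0`.
-/

open Filter Topology Set

theorem tendsto_zero_of_monotoneOn_le_of_tendsto {f : ℝ → ℝ} {L : ℝ} {σ u : ℕ → ℝ}
    (hf : MonotoneOn f (Ioi 0)) (hfL : ∀ t > 0, L < f t) (hσ : ∀ n, 0 < σ n)
    (hu : Tendsto u atTop (𝓝 L)) (hle : ∀ᶠ n in atTop, f (σ n) ≤ u n) :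
    Tendsto σ atTop (𝓝 0) := by
  refine tendsto_order.2 ⟨fun a ha => .of_forall fun n => ha.trans (hσ n), fun ε hε => ?_⟩
  filter_upwards [hu.eventually_lt_const (hfL ε hε), hle] with n hu_lt hle_n
  by_contra! hεσ
  have := hf hε (hσ n) hεσ
  linarith

theorem exists_pos_mul_rpow_le_of_tendsto {g : ℝ → ℝ} {r : ℝ}
    (h : Tendsto (fun t => g t / t ^ r) (𝓝[>] 0) atTop ∨
      ∃ l : ℝ, 0 < l ∧ Tendsto (fun t => g t / t ^ r) (𝓝[>] 0) (𝓝 l)) :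
    ∃ c > 0, ∀ᶠ t in 𝓝[>] (0 : ℝ), c * t ^ r ≤ g t := by
  obtain ⟨c, hc, hcg⟩ : ∃ c > 0, ∀ᶠ t in 𝓝[>] (0 : ℝ), c ≤ g t / t ^ r := by
    rcases h with h | ⟨l, hl, h⟩
    · exact ⟨1, one_pos, h.eventually_ge_atTop 1⟩
    · exact ⟨l / 2, half_pos hl, (h.eventually_const_lt (half_lt_self hl)).mono fun _ => le_of_lt⟩
  refine ⟨c, hc, ?_⟩
  filter_upwards [hcg, self_mem_nhdsWithin] with t ht (htpos : 0 < t)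
  rwa [le_div_iff₀ (Real.rpow_pos_of_pos htpos r)] at ht

theorem tendsto_nat_mul_of_le_const_mul_pow {a : ℕ → ℝ} {C k : ℝ} (hk0 : 0 ≤ k) (hk1 : k < 1)
    (ha0 : ∀ n, 0 ≤ a n) (ha : ∀ᶠ n in atTop, a n ≤ C * k ^ n) :
    Tendsto (fun n : ℕ => (n : ℝ) * a n) atTop (𝓝 0) := by
  have hlim : Tendsto (fun n : ℕ => C * ((n : ℝ) * k ^ n)) atTop (𝓝 0) := by
    simpa using (tendsto_self_mul_const_pow_of_lt_one hk0 hk1).const_mul C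
  refine squeeze_zero' (.of_forall fun n => mul_nonneg n.cast_nonneg (ha0 n)) ?_ hlim
  filter_upwards [ha] with n hn
  calc (n : ℝ) * a n ≤ n * (C * k ^ n) := mul_le_mul_of_nonneg_left hn n.cast_nonneg
    _ = C * (n * k ^ n) := by ring

theorem rpow_sub_one_le_mul_sub_one {A x : ℝ} (hA : 0 ≤ A) (hx0 : 0 ≤ x) (hx1 : x ≤ 1) :
    A ^ x - 1 ≤ x * (A - 1) := by
  have := rpow_one_add_le_one_add_mul_self (s := A - 1) (by linarith) hx0 hx1
  rw [add_sub_cancel] at this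
  linarith

theorem stmt_18_general (ϑ : ℝ → ℝ) (hϑ1 : ∀ t > 0, 1 < ϑ t)
    (hϑm : MonotoneOn ϑ (Set.Ioi 0))
    (r : ℝ)
    (hϑ3 : Tendsto (fun t => (ϑ t - 1) / t ^ r) (𝓝[>] 0) atTop ∨
      ∃ l : ℝ, 0 < l ∧ Tendsto (fun t => (ϑ t - 1) / t ^ r) (𝓝[>] 0) (𝓝 l))
    (k : ℝ) (hk : k ∈ Set.Ioo (0 : ℝ) 1)
    (σ : ℕ → ℝ) (hσ : ∀ n, 0 < σ n)
    (hbound : ∀ n : ℕ, 1 ≤ n → 1 < ϑ (σ n) ∧ ϑ (σ n) ≤ ϑ (σ 0) ^ (k ^ n)) :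
    Tendsto σ atTop (𝓝 0) ∧
    Tendsto (fun n : ℕ => (n : ℝ) * σ n ^ r) atTop (𝓝 0) := by
  obtain ⟨hk0, hk1⟩ := hk
  set A := ϑ (σ 0)
  have hA : 1 < A := hϑ1 _ (hσ 0)
  have hAk : Tendsto (fun n : ℕ => A ^ (k ^ n)) atTop (𝓝 1) := by
    simpa [Function.comp_def] using ((Real.continuous_const_rpow (by positivity)).tendsto 0).comp
      (tendsto_pow_atTop_nhds_zero_of_lt_one hk0.le hk1)
  have hle : ∀ᶠ n in atTop, ϑ (σ n) ≤ A ^ (k ^ n) := by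
    filter_upwards [eventually_ge_atTop 1] with n hn using (hbound n hn).2
  have hσ0 : Tendsto σ atTop (𝓝 0) := tendsto_zero_of_monotoneOn_le_of_tendsto hϑm hϑ1 hσ hAk hle
  refine ⟨hσ0, ?_⟩
  obtain ⟨c, hc, hlow⟩ := exists_pos_mul_rpow_le_of_tendsto hϑ3
  have hσ0' : Tendsto σ atTop (𝓝[>] 0) :=
    tendsto_nhdsWithin_of_tendsto_nhds_of_eventually_within _ hσ0 (.of_forall hσ)
  refine tendsto_nat_mul_of_le_const_mul_pow (C := (A - 1) / c) hk0.le hk1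
    (fun n => (Real.rpow_pos_of_pos (hσ n) r).le) ?_
  filter_upwards [hσ0'.eventually hlow, hle] with n hlow_n hle_n
  calc σ n ^ r ≤ (ϑ (σ n) - 1) / c := by rw [le_div_iff₀ hc]; linarith
    _ ≤ (A ^ (k ^ n) - 1) / c := by gcongr
    _ ≤ k ^ n * (A - 1) / c := by
      gcongr
      exact rpow_sub_one_le_mul_sub_one (by linarith) (by positivity) (pow_le_one₀ hk0.le hk1.le)
    _ = (A - 1) / c * k ^ n := by ring

theorem stmt_18 (ϑ : ℝ → ℝ) (hϑ1 : ∀ t > 0, 1 < ϑ t)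
    (hϑm : MonotoneOn ϑ (Set.Ioi 0))
    (r : ℝ) (hr : r ∈ Set.Ioo (0 : ℝ) 1)
    (hϑ3 : Tendsto (fun t => (ϑ t - 1) / t ^ r) (𝓝[>] 0) atTop ∨
      ∃ l : ℝ, 0 < l ∧ Tendsto (fun t => (ϑ t - 1) / t ^ r) (𝓝[>] 0) (𝓝 l))
    (k : ℝ) (hk : k ∈ Set.Ioo (0 : ℝ) 1)
    (σ : ℕ → ℝ) (hσ : ∀ n, 0 < σ n) (hdec : Antitone σ)
    (hbound : ∀ n : ℕ, 1 ≤ n → 1 < ϑ (σ n) ∧ ϑ (σ n) ≤ ϑ (σ 0) ^ (k ^ n)) :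
    Tendsto σ atTop (𝓝 0) ∧
    Tendsto (fun n : ℕ => (n : ℝ) * σ n ^ r) atTop (𝓝 0) :=
  stmt_18_general ϑ hϑ1 hϑm r hϑ3 k hk σ hσ hbound
end
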